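/- arXiv:1605.00076 — 2 statements merged into one kernel-verified Lean document; each statement's English description precedes it below -/
import Mathlib

section
/- Under assumptions (A1)-(A3), the augmented Lagrangian values along the asynchronous proximal ADMM iterates are bounded from below: for every time t ≥ 1, L({x_k^t}, z^t, {y_k^t}) ≥ P − Σ_{k=1}^K (L_k/2) Σ_{j∈N_k} diam²(X_j) > −∞, where P denotes the optimal value of the problem min Σ_k g_k({x_n}_{n∈N_k}) + h_k(x_k) subject to x_k ∈ X_k for all k, and diam(X_j) is the diameter of the compact set X_j. -/
open Filter Topology RealInnerProductSpace

noncomputable section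

/-- Zero-padded restriction of a vector of nodal variables to a neighborhood:
coordinates outside the neighborhood are set to zero. -/
def restr {K : ℕ} (Nk : Finset (Fin K)) (v : Fin K → ℝ) : EuclideanSpace ℝ (Fin K) :=
  WithLp.toLp 2 (fun j => if j ∈ Nk then v j else 0)

/-- The setting of the asynchronous proximal ADMM: network data, assumptions
(A1)-(A2), and the algorithmic update equations (i)-(iii) together with the
delay bounds and the update-frequency condition. -/
structure ProxADMM (K : ℕ) where
  /-- neighborhoods, `j ∈ Nb k` means `j ∈ N_k` -/
  Nb : Fin K → Finset (Fin K)
  self_mem : ∀ k, k ∈ Nb k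
  symm : ∀ k j, j ∈ Nb k ↔ k ∈ Nb j
  /-- local cost of node `k`, as a function of the zero-padded neighborhood variables -/
  g : Fin K → EuclideanSpace ℝ (Fin K) → ℝ
  g_local : ∀ k v w, (∀ j ∈ Nb k, v j = w j) → g k v = g k w
  /-- the Lipschitz constants of (A1) -/
  L : Fin K → ℝ
  L_pos : ∀ k, 0 < L k
  g_diff : ∀ k, Differentiable ℝ (g k)
  /-- (A1): the gradient of `g k` is `L k`-Lipschitz -/
  g_grad_lip : ∀ k v w, ‖gradient (g k) v - gradient (g k) w‖ ≤ L k * ‖v - w‖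
  /-- the convex nonsmooth part -/
  h : Fin K → ℝ → ℝ
  h_convex : ∀ k, ConvexOn ℝ Set.univ (h k)
  /-- the constraint sets -/
  Xs : Fin K → Set ℝ
  Xs_nonempty : ∀ k, (Xs k).Nonempty
  Xs_compact : ∀ k, IsCompact (Xs k)
  Xs_convex : ∀ k, Convex ℝ (Xs k)
  /-- (A2): `g k` is bounded below over the constraint set -/
  g_bddBelow : ∀ k, ∃ b, ∀ v : Fin K → ℝ, (∀ j, v j ∈ Xs j) → b ≤ g k (restr (Nb k) v)
  /-- penalty parameters -/
  ρ : Fin K → ℝ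
  ρ_pos : ∀ k, 0 < ρ k
  /-- update frequencies `f_k` -/
  freq : Fin K → ℝ
  freq_pos : ∀ k, 0 < freq k
  freq_le_one : ∀ k, freq k ≤ 1
  /-- maximum delays `T_k` -/
  Td : Fin K → ℕ
  /-- updating sets `S^t` -/
  Sset : ℕ → Finset (Fin K)
  /-- delayed index: `τ t k = [t+1]_k` -/
  τ : ℕ → Fin K → ℕ
  τ_le : ∀ t k, τ t k ≤ t + 1
  τ_ge : ∀ t k, t + 1 ≤ τ t k + Td k
  /-- iterates -/
  x : ℕ → Fin K → Fin K → ℝ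
  z : ℕ → Fin K → ℝ
  y : ℕ → Fin K → Fin K → ℝ
  z_init_mem : ∀ j, z 0 j ∈ Xs j
  /-- (i): feasibility of the `z`-update -/
  z_update_mem : ∀ t j, j ∈ Sset t → z (t + 1) j ∈ Xs j
  /-- (i): for `j ∈ S^t`, `z_j^{t+1}` minimizes the `j`-th block over `X_j` -/
  z_update_min : ∀ t j, j ∈ Sset t → IsMinOn
      (fun w => h j w + ∑ k ∈ Nb j, (y t k j * (x t k j - w) + ρ k / 2 * (x t k j - w) ^ 2))
      (Xs j) (z (t + 1) j)
  /-- (i): non-updating nodes keep their old value -/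
  z_noupdate : ∀ t j, j ∉ Sset t → z (t + 1) j = z t j
  /-- (ii): proximal (linearized) `x`-update with delayed gradient -/
  x_update : ∀ t k, ∀ j ∈ Nb k,
      x (t + 1) k j = z (t + 1) j
        - (1 / ρ k) * (gradient (g k) (restr (Nb k) (z (τ t k))) j + y t k j)
  /-- (iii): dual update -/
  y_update : ∀ t k, ∀ j ∈ Nb k,
      y (t + 1) k j = y t k j + ρ k * (x (t + 1) k j - z (t + 1) j)
  /-- in any window of `T` consecutive iterations node `k` updates at least `f_k T` times -/
  update_freq : ∀ k (t₀ T : ℕ),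
      freq k * T ≤ ((Finset.Ico t₀ (t₀ + T)).filter (fun t => k ∈ Sset t)).card

/-- The augmented Lagrangian. -/
def ProxADMM.Lag {K : ℕ} (P : ProxADMM K) (xx : Fin K → Fin K → ℝ) (zz : Fin K → ℝ)
    (yy : Fin K → Fin K → ℝ) : ℝ :=
  ∑ k, (P.g k (restr (P.Nb k) (xx k)) + P.h k (zz k)
    + ∑ j ∈ P.Nb k, (yy k j * (xx k j - zz j) + P.ρ k / 2 * (xx k j - zz j) ^ 2))

end

/-!
For `t ≥ 1` the `x`- and `y`-updates combine to `y_k^t = -∇g_k(z_k^{[t]_k})`, so node `k`'s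
coupling terms in the Lagrangian equal `-⟪∇g_k(u), x - v⟫ + ρ_k/2 ‖x - v‖²` with `x = x_k^t`,
`v = z_k^t` and the delayed point `u = z_k^{[t]_k}`. The mean value inequality for the
`L_k`-Lipschitz gradient bounds `g_k(x) - ⟪∇g_k(u), x - v⟫` below by
`g_k(v) - 3L_k/2 ‖x - v‖² - L_k/2 ‖v - u‖²`; the first error is absorbed by `ρ_k ≥ 3L_k`, and
since `u` and `v` are both feasible the second is at most `L_k/2 Σ_{j∈N_k} diam²(X_j)`.
Summing over `k` leaves the objective at the feasible point `z^t`, which is at least `P`.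
-/

open scoped Gradient

section LipschitzGradient

variable {E : Type*} [NormedAddCommGroup E] [InnerProductSpace ℝ E] [CompleteSpace E]
  {g : E → ℝ} {L : ℝ}

theorem abs_sub_sub_inner_gradient_le (hL : 0 ≤ L) (hg : Differentiable ℝ g)
    (hlip : ∀ v w, ‖∇ g v - ∇ g w‖ ≤ L * ‖v - w‖) (u v x : E) :
    |g x - g v - ⟪∇ g u, x - v⟫| ≤ L * (‖x - v‖ + ‖v - u‖) * ‖x - v‖ := by
  have hfderiv : ∀ w, fderiv ℝ g w = InnerProductSpace.toDual ℝ E (∇ g w) := fun w =>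
    ((InnerProductSpace.toDual ℝ E).apply_symm_apply _).symm
  have hbound : ∀ w ∈ segment ℝ v x,
      ‖fderiv ℝ g w - InnerProductSpace.toDual ℝ E (∇ g u)‖ ≤ L * (‖x - v‖ + ‖v - u‖) := by
    intro w hw
    have hwv : ‖w - v‖ ≤ ‖x - v‖ := by
      rw [← dist_eq_norm, ← dist_eq_norm, dist_comm w, dist_comm x]
      linarith [dist_add_dist_of_mem_segment hw, dist_nonneg (x := w) (y := x)]
    rw [hfderiv, ← map_sub, LinearIsometryEquiv.norm_map]
    calc ‖∇ g w - ∇ g u‖ ≤ L * ‖(w - v) + (v - u)‖ := by simpa using hlip w u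
      _ ≤ L * (‖x - v‖ + ‖v - u‖) :=
        mul_le_mul_of_nonneg_left ((norm_add_le _ _).trans (by linarith)) hL
  simpa [InnerProductSpace.toDual_apply_apply] using
    (convex_segment v x).norm_image_sub_le_of_norm_fderiv_le' (fun w _ => hg w) hbound
      (left_mem_segment ℝ v x) (right_mem_segment ℝ v x)

theorem sub_le_sub_inner_gradient (hL : 0 ≤ L) (hg : Differentiable ℝ g)
    (hlip : ∀ v w, ‖∇ g v - ∇ g w‖ ≤ L * ‖v - w‖) (u v x : E) :
    g v - 3 * L / 2 * ‖x - v‖ ^ 2 - L / 2 * ‖v - u‖ ^ 2 ≤ g x - ⟪∇ g u, x - v⟫ := by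
  have h := neg_le_of_abs_le (abs_sub_sub_inner_gradient_le hL hg hlip u v x)
  nlinarith [mul_nonneg hL (sq_nonneg (‖x - v‖ - ‖v - u‖))]

end LipschitzGradient

section Restriction

variable {K : ℕ} (N : Finset (Fin K))

theorem restr_sub (a b : Fin K → ℝ) : restr N a - restr N b = restr N (a - b) := by
  ext j
  by_cases hj : j ∈ N <;> simp [restr, hj]

theorem inner_restr (w : EuclideanSpace ℝ (Fin K)) (a : Fin K → ℝ) :
    ⟪w, restr N a⟫ = ∑ j ∈ N, w j * a j := by
  simp only [PiLp.inner_apply, restr, RCLike.inner_apply, conj_trivial, ite_mul, zero_mul,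
    Fintype.sum_ite_mem]
  exact Finset.sum_congr rfl fun _ _ => mul_comm _ _

theorem norm_restr_sq (a : Fin K → ℝ) : ‖restr N a‖ ^ 2 = ∑ j ∈ N, a j ^ 2 := by
  rw [EuclideanSpace.real_norm_sq_eq, ← Fintype.sum_ite_mem N]
  exact Finset.sum_congr rfl fun j _ => by by_cases hj : j ∈ N <;> simp [restr, hj]

theorem norm_restr_sub_sq_le_sum_diam_sq {X : Fin K → Set ℝ}
    (hX : ∀ j, Bornology.IsBounded (X j)) {a b : Fin K → ℝ} (ha : ∀ j, a j ∈ X j)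
    (hb : ∀ j, b j ∈ X j) :
    ‖restr N a - restr N b‖ ^ 2 ≤ ∑ j ∈ N, Metric.diam (X j) ^ 2 := by
  rw [restr_sub, norm_restr_sq]
  refine Finset.sum_le_sum fun j _ => ?_
  rw [Pi.sub_apply, ← sq_abs, ← Real.dist_eq]
  exact pow_le_pow_left₀ dist_nonneg (Metric.dist_le_diam_of_mem (hX j) (ha j) (hb j)) 2

end Restriction

namespace ProxADMM

variable {K : ℕ} (P : ProxADMM K)

def objective (u : Fin K → ℝ) : ℝ :=
  ∑ k, (P.g k (restr (P.Nb k) u) + P.h k (u k))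

theorem sInf_objective_le {u : Fin K → ℝ} (hu : ∀ k, u k ∈ P.Xs k) :
    sInf {v : ℝ | ∃ u : Fin K → ℝ, (∀ k, u k ∈ P.Xs k) ∧ v = P.objective u}
      ≤ P.objective u := by
  refine csInf_le ?_ ⟨u, hu, rfl⟩
  choose b hb using P.g_bddBelow
  choose m hm using fun k => (P.Xs_compact k).bddBelow_image
    (((P.h_convex k).continuousOn isOpen_univ).mono (Set.subset_univ _))
  refine ⟨∑ k, (b k + m k), ?_⟩
  rintro _ ⟨w, hw, rfl⟩
  exact Finset.sum_le_sum fun k _ => add_le_add (hb k w hw) (hm k ⟨w k, hw k, rfl⟩)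

theorem z_mem (t : ℕ) (j : Fin K) : P.z t j ∈ P.Xs j := by
  induction t with
  | zero => exact P.z_init_mem j
  | succ t ih =>
    by_cases hj : j ∈ P.Sset t
    · exact P.z_update_mem t j hj
    · rwa [P.z_noupdate t j hj]

theorem y_succ_eq (t : ℕ) {k j : Fin K} (hj : j ∈ P.Nb k) :
    P.y (t + 1) k j = -∇ (P.g k) (restr (P.Nb k) (P.z (P.τ t k))) j := by
  rw [P.y_update t k j hj, P.x_update t k j hj]
  field_simp [(P.ρ_pos k).ne']
  ring

theorem sum_coupling_succ_eq (t : ℕ) (k : Fin K) :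
    ∑ j ∈ P.Nb k, (P.y (t + 1) k j * (P.x (t + 1) k j - P.z (t + 1) j)
        + P.ρ k / 2 * (P.x (t + 1) k j - P.z (t + 1) j) ^ 2)
      = -⟪∇ (P.g k) (restr (P.Nb k) (P.z (P.τ t k))),
            restr (P.Nb k) (P.x (t + 1) k) - restr (P.Nb k) (P.z (t + 1))⟫
        + P.ρ k / 2 * ‖restr (P.Nb k) (P.x (t + 1) k) - restr (P.Nb k) (P.z (t + 1))‖ ^ 2 := by
  rw [restr_sub, inner_restr, norm_restr_sq, Finset.mul_sum, ← Finset.sum_neg_distrib,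
    ← Finset.sum_add_distrib]
  refine Finset.sum_congr rfl fun j hj => ?_
  rw [P.y_succ_eq t hj, Pi.sub_apply]
  ring

theorem g_z_sub_le_g_x_add_coupling {k : Fin K} (hρ : 3 * P.L k ≤ P.ρ k) (t : ℕ) :
    P.g k (restr (P.Nb k) (P.z (t + 1))) - P.L k / 2 * ∑ j ∈ P.Nb k, Metric.diam (P.Xs j) ^ 2
      ≤ P.g k (restr (P.Nb k) (P.x (t + 1) k))
        + ∑ j ∈ P.Nb k, (P.y (t + 1) k j * (P.x (t + 1) k j - P.z (t + 1) j)
          + P.ρ k / 2 * (P.x (t + 1) k j - P.z (t + 1) j) ^ 2) := by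
  set u := restr (P.Nb k) (P.z (P.τ t k))
  set v := restr (P.Nb k) (P.z (t + 1))
  set x := restr (P.Nb k) (P.x (t + 1) k)
  have hdescent := sub_le_sub_inner_gradient (P.L_pos k).le (P.g_diff k) (P.g_grad_lip k) u v x
  have hdelay : ‖v - u‖ ^ 2 ≤ ∑ j ∈ P.Nb k, Metric.diam (P.Xs j) ^ 2 :=
    norm_restr_sub_sq_le_sum_diam_sq _ (fun j => (P.Xs_compact j).isBounded)
      (P.z_mem (t + 1)) (P.z_mem (P.τ t k))
  rw [P.sum_coupling_succ_eq]
  have hL := P.L_pos k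
  nlinarith [mul_le_mul_of_nonneg_left hdelay hL.le,
    mul_le_mul_of_nonneg_right hρ (sq_nonneg ‖x - v‖)]

theorem objective_sub_le_lag (hρ : ∀ k, 3 * P.L k ≤ P.ρ k) (t : ℕ) :
    P.objective (P.z (t + 1)) - ∑ k, P.L k / 2 * ∑ j ∈ P.Nb k, Metric.diam (P.Xs j) ^ 2
      ≤ P.Lag (P.x (t + 1)) (P.z (t + 1)) (P.y (t + 1)) := by
  rw [objective, Lag, ← Finset.sum_sub_distrib]
  exact Finset.sum_le_sum fun k _ => by linarith [P.g_z_sub_le_g_x_add_coupling (hρ k) t]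

end ProxADMM

theorem prox_admm_lagrangian_bounded_below_general {K : ℕ} (P : ProxADMM K)
    (α β : Fin K → ℝ)
    (hβ : ∀ k, β k = P.ρ k - 7 * P.L k)
    (hA3 : ∀ k, 0 < α k ∧ 0 < β k)
    -- `Popt` is the optimal value of `min Σ_k g_k({x_n}_{n∈N_k}) + h_k(x_k)`
    -- subject to `x_k ∈ X_k` for every `k`
    (Popt : ℝ)
    (hPopt : Popt = sInf {v : ℝ | ∃ u : Fin K → ℝ, (∀ k, u k ∈ P.Xs k) ∧
      v = ∑ k, (P.g k (restr (P.Nb k) u) + P.h k (u k))}) :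
    ∀ t : ℕ, 1 ≤ t →
      Popt - ∑ k, P.L k / 2 * ∑ j ∈ P.Nb k, Metric.diam (P.Xs j) ^ 2
        ≤ P.Lag (P.x t) (P.z t) (P.y t) := by
  intro t ht
  obtain ⟨s, rfl⟩ := Nat.exists_eq_add_of_le' ht
  have hρ : ∀ k, 3 * P.L k ≤ P.ρ k := fun k => by linarith [hβ k, (hA3 k).2, P.L_pos k]
  have hPopt_le : Popt ≤ P.objective (P.z (s + 1)) :=
    hPopt ▸ P.sInf_objective_le (P.z_mem (s + 1))
  linarith [P.objective_sub_le_lag hρ s]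

/-- **Lemma 1(b)** (asynchronous proximal ADMM, assumptions (A1)-(A3)): the
augmented Lagrangian values along the iterates are bounded from below by
`P - Σ_k (L_k/2) Σ_{j∈N_k} diam²(X_j)`, where `P` is the optimal value of the
partially separable problem. -/
theorem prox_admm_lagrangian_bounded_below {K : ℕ} (P : ProxADMM K)
    (α β : Fin K → ℝ)
    (hα : ∀ k, α k = P.ρ k * P.freq k / 2
      - (7 * P.L k / (2 * P.ρ k ^ 2) + 1 / P.ρ k) * ((P.Nb k).card : ℝ) * P.L k ^ 2
          * ((P.Td k : ℝ) + 1) ^ 2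
      - ((P.Nb k).card : ℝ) * P.L k * (P.Td k : ℝ) ^ 2 / 2)
    (hβ : ∀ k, β k = P.ρ k - 7 * P.L k)
    (hA3 : ∀ k, 0 < α k ∧ 0 < β k)
    -- `Popt` is the optimal value of `min Σ_k g_k({x_n}_{n∈N_k}) + h_k(x_k)`
    -- subject to `x_k ∈ X_k` for every `k`
    (Popt : ℝ)
    (hPopt : Popt = sInf {v : ℝ | ∃ u : Fin K → ℝ, (∀ k, u k ∈ P.Xs k) ∧
      v = ∑ k, (P.g k (restr (P.Nb k) u) + P.h k (u k))}) :
    ∀ t : ℕ, 1 ≤ t →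
      Popt - ∑ k, P.L k / 2 * ∑ j ∈ P.Nb k, Metric.diam (P.Xs j) ^ 2
        ≤ P.Lag (P.x t) (P.z t) (P.y t) :=
  prox_admm_lagrangian_bounded_below_general P α β hβ hA3 Popt hPopt
end

section
/- Majorized dual difference bound: under assumptions (A2), (A4) and (A5), along the asynchronous majorized ADMM iterates one has y_{kj}^{t+1} = −[∇_x f_k(x_k^{t+1}, z_k^{[t+1]_k})]_j for all j ∈ N_k, and consequently for every node k and every t: Σ_{j∈N_k} ‖y_{kj}^{t+1} − y_{kj}^t‖² ≤ 2L_k² ‖x_k^{t+1} − x_k^t‖² + 2L_k²(T_k+1) Σ_{d=0}^{T_k} Σ_{j∈N_k} ‖z_j^{t+1−d} − z_j^{t−d}‖². -/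
/-!
The optimality condition of the `x`-update, combined with the dual update, identifies
`y_{kj}^{t+1}` with `-[∇_x f_k(x_k^{t+1}, z_k^{[t+1]_k})]_j`. Consecutive dual differences are
therefore differences of surrogate gradients, which (A4) bounds by
`L_k (‖Δx_k‖ + ‖Δz̃_k‖)`, whence the factor `2 L_k²` after squaring. The linearization points
`[t+1]_k` and `[t]_k` both lie in the window `[t - T_k, t + 1]`, so their distance is at most a
sum of `T_k + 1` consecutive `z`-differences, and Cauchy–Schwarz yields the factor `T_k + 1`.
-/

open Filter Topology RealInnerProductSpace

noncomputable section

/-- The setting of the asynchronous majorized ADMM: network data, majorizing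
surrogates, assumptions (A2) and (A4), and the algorithmic update equations
(i)-(iii) together with the delay bounds and the update-frequency condition. -/
structure MajADMM (K : ℕ) where
  /-- neighborhoods, `j ∈ Nb k` means `j ∈ N_k` -/
  Nb : Fin K → Finset (Fin K)
  self_mem : ∀ k, k ∈ Nb k
  symm : ∀ k j, j ∈ Nb k ↔ k ∈ Nb j
  /-- local cost of node `k`, as a function of the zero-padded neighborhood variables -/
  g : Fin K → EuclideanSpace ℝ (Fin K) → ℝ
  g_local : ∀ k v w, (∀ j ∈ Nb k, v j = w j) → g k v = g k w
  g_diff : ∀ k, Differentiable ℝ (g k)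
  /-- the majorizing surrogate `f_k(x, z̃)` -/
  F : Fin K → EuclideanSpace ℝ (Fin K) → EuclideanSpace ℝ (Fin K) → ℝ
  F_local : ∀ k v w zt, (∀ j ∈ Nb k, v j = w j) → F k v zt = F k w zt
  F_diff : ∀ k zt, Differentiable ℝ (fun v => F k v zt)
  F_convex : ∀ k zt, ConvexOn ℝ Set.univ (fun v => F k v zt)
  /-- majorization: `g_k(x) ≤ f_k(x, z̃)` -/
  F_major : ∀ k v zt, g k v ≤ F k v zt
  /-- tightness: `f_k(z̃, z̃) = g_k(z̃)` -/
  F_touch : ∀ k zt, F k zt zt = g k zt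
  /-- gradient consistency: `∇_x f_k(x, z̃)|_{x = z̃} = ∇g_k(z̃)` -/
  F_grad_touch : ∀ k zt, gradient (fun v => F k v zt) zt = gradient (g k) zt
  /-- the Lipschitz constants of (A4) -/
  L : Fin K → ℝ
  L_nonneg : ∀ k, 0 ≤ L k
  /-- (A4): `∇g_k` is `L_k`-Lipschitz -/
  g_grad_lip : ∀ k v w, ‖gradient (g k) v - gradient (g k) w‖ ≤ L k * ‖v - w‖
  /-- (A4): `∇_x f_k(·, z̃)` is `L_k`-Lipschitz -/
  F_grad_lip_x : ∀ k zt v w,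
    ‖gradient (fun u => F k u zt) v - gradient (fun u => F k u zt) w‖ ≤ L k * ‖v - w‖
  /-- (A4): `∇_x f_k(x, ·)` is `L_k`-Lipschitz -/
  F_grad_lip_z : ∀ k v zt zt',
    ‖gradient (fun u => F k u zt) v - gradient (fun u => F k u zt') v‖ ≤ L k * ‖zt - zt'‖
  /-- the convex nonsmooth part -/
  h : Fin K → ℝ → ℝ
  h_convex : ∀ k, ConvexOn ℝ Set.univ (h k)
  /-- the constraint sets -/
  Xs : Fin K → Set ℝ
  Xs_nonempty : ∀ k, (Xs k).Nonempty
  Xs_compact : ∀ k, IsCompact (Xs k)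
  Xs_convex : ∀ k, Convex ℝ (Xs k)
  /-- (A2): `g k` is bounded below over the constraint set -/
  g_bddBelow : ∀ k, ∃ b, ∀ v : Fin K → ℝ, (∀ j, v j ∈ Xs j) → b ≤ g k (restr (Nb k) v)
  /-- penalty parameters -/
  ρ : Fin K → ℝ
  ρ_pos : ∀ k, 0 < ρ k
  /-- update frequencies `f_k` -/
  freq : Fin K → ℝ
  freq_pos : ∀ k, 0 < freq k
  freq_le_one : ∀ k, freq k ≤ 1
  /-- maximum delays `T_k` -/
  Td : Fin K → ℕ
  /-- updating sets `S^t` -/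
  Sset : ℕ → Finset (Fin K)
  /-- delayed index: `τ t k = [t+1]_k` -/
  τ : ℕ → Fin K → ℕ
  τ_le : ∀ t k, τ t k ≤ t + 1
  τ_ge : ∀ t k, t + 1 ≤ τ t k + Td k
  /-- iterates -/
  x : ℕ → Fin K → Fin K → ℝ
  z : ℕ → Fin K → ℝ
  y : ℕ → Fin K → Fin K → ℝ
  z_init_mem : ∀ j, z 0 j ∈ Xs j
  /-- (i): feasibility of the `z`-update -/
  z_update_mem : ∀ t j, j ∈ Sset t → z (t + 1) j ∈ Xs j
  /-- (i): for `j ∈ S^t`, `z_j^{t+1}` minimizes the `j`-th block over `X_j` -/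
  z_update_min : ∀ t j, j ∈ Sset t → IsMinOn
      (fun w => h j w + ∑ k ∈ Nb j, (y t k j * (x t k j - w) + ρ k / 2 * (x t k j - w) ^ 2))
      (Xs j) (z (t + 1) j)
  /-- (i): non-updating nodes keep their old value -/
  z_noupdate : ∀ t j, j ∉ Sset t → z (t + 1) j = z t j
  /-- `x_{kj} = 0` outside the neighborhood -/
  x_pad : ∀ t k j, j ∉ Nb k → x t k j = 0
  /-- (ii): majorized `x`-update with delayed linearization point -/
  x_update : ∀ t k, IsMinOn
      (fun v : EuclideanSpace ℝ (Fin K) =>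
        F k v (restr (Nb k) (z (τ t k)))
          + ∑ j ∈ Nb k, (y t k j * (v j - z (t + 1) j) + ρ k / 2 * (v j - z (t + 1) j) ^ 2))
      Set.univ (restr (Nb k) (x (t + 1) k))
  /-- (iii): dual update -/
  y_update : ∀ t k, ∀ j ∈ Nb k,
      y (t + 1) k j = y t k j + ρ k * (x (t + 1) k j - z (t + 1) j)
  /-- in any window of `T` consecutive iterations node `k` updates at least `f_k T` times -/
  update_freq : ∀ k (t₀ T : ℕ),
      freq k * T ≤ ((Finset.Ico t₀ (t₀ + T)).filter (fun t => k ∈ Sset t)).card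

/-- The augmented Lagrangian. -/
def MajADMM.Lag {K : ℕ} (P : MajADMM K) (xx : Fin K → Fin K → ℝ) (zz : Fin K → ℝ)
    (yy : Fin K → Fin K → ℝ) : ℝ :=
  ∑ k, (P.g k (restr (P.Nb k) (xx k)) + P.h k (zz k)
    + ∑ j ∈ P.Nb k, (yy k j * (xx k j - zz j) + P.ρ k / 2 * (xx k j - zz j) ^ 2))

end

open Finset

theorem sq_dist_le_mul_sum_sq_dist {α : Type*} [PseudoMetricSpace α] (v : ℕ → α) {T m n : ℕ}
    (hm : m ≤ T + 1) (hn : n ≤ T + 1) :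
    dist (v m) (v n) ^ 2 ≤ (T + 1) * ∑ d ∈ range (T + 1), dist (v d) (v (d + 1)) ^ 2 := by
  wlog hmn : m ≤ n generalizing m n
  · rw [dist_comm]; exact this hn hm (le_of_not_ge hmn)
  have hsub : Ico m n ⊆ range (T + 1) := fun d hd => by
    rw [mem_Ico] at hd; rw [mem_range]; omega
  calc dist (v m) (v n) ^ 2 ≤ (∑ d ∈ Ico m n, dist (v d) (v (d + 1))) ^ 2 := by
        gcongr; exact dist_le_Ico_sum_dist v hmn
    _ ≤ #(Ico m n) * ∑ d ∈ Ico m n, dist (v d) (v (d + 1)) ^ 2 := sq_sum_le_card_mul_sum_sq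
    _ ≤ (T + 1) * ∑ d ∈ range (T + 1), dist (v d) (v (d + 1)) ^ 2 := by
        gcongr
        exact_mod_cast (card_le_card hsub).trans (card_range _).le

theorem sq_dist_le_of_window {α : Type*} [PseudoMetricSpace α] (u : ℕ → α) {T t a b : ℕ}
    (ha : a ≤ t + 1) (hb : b ≤ t + 1) (ha' : t ≤ a + T) (hb' : t ≤ b + T) :
    dist (u a) (u b) ^ 2
      ≤ (T + 1) * ∑ d ∈ range (T + 1), dist (u (t + 1 - d)) (u (t - d)) ^ 2 := by
  have key := sq_dist_le_mul_sum_sq_dist (fun d => u (t + 1 - d)) (T := T)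
    (m := t + 1 - a) (n := t + 1 - b) (by omega) (by omega)
  simpa only [Nat.sub_sub_self ha, Nat.sub_sub_self hb, Nat.add_sub_add_right] using key

theorem norm_restr_sub_restr_sq {K : ℕ} (s : Finset (Fin K)) (u w : Fin K → ℝ) :
    ‖restr s u - restr s w‖ ^ 2 = ∑ j ∈ s, ‖u j - w j‖ ^ 2 := by
  rw [EuclideanSpace.norm_sq_eq, ← sum_subset (subset_univ s) fun j _ hj => by simp [restr, hj]]
  refine sum_congr rfl fun j hj => ?_
  simp [restr, hj]

theorem norm_restr_sub_sq_le_of_window {K : ℕ} (s : Finset (Fin K)) (u : ℕ → Fin K → ℝ)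
    {T t a b : ℕ} (ha : a ≤ t + 1) (hb : b ≤ t + 1) (ha' : t ≤ a + T) (hb' : t ≤ b + T) :
    ‖restr s (u a) - restr s (u b)‖ ^ 2
      ≤ (T + 1) * ∑ d ∈ range (T + 1), ∑ j ∈ s, ‖u (t + 1 - d) j - u (t - d) j‖ ^ 2 := by
  rw [norm_restr_sub_restr_sq, sum_comm, mul_sum]
  refine sum_le_sum fun j _ => ?_
  simpa only [dist_eq_norm] using sq_dist_le_of_window (fun n => u n j) ha hb ha' hb'

theorem sum_norm_sq_apply_le_norm_sq {ι : Type*} [Fintype ι] (s : Finset ι)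
    (v : EuclideanSpace ℝ ι) : ∑ i ∈ s, ‖v i‖ ^ 2 ≤ ‖v‖ ^ 2 := by
  rw [EuclideanSpace.norm_sq_eq]
  exact sum_le_univ_sum_of_nonneg fun _ => sq_nonneg _

theorem gradient_apply_eq_fderiv_single {ι : Type*} [Fintype ι] [DecidableEq ι]
    (φ : EuclideanSpace ℝ ι → ℝ) (v : EuclideanSpace ℝ ι) (j : ι) :
    gradient φ v j = fderiv ℝ φ v (EuclideanSpace.single j 1) := by
  rw [← inner_gradient_left, EuclideanSpace.inner_single_right]
  simp

theorem gradient_apply_eq_neg_of_isMinOn_add_sum {ι : Type*} [Fintype ι] [DecidableEq ι]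
    {φ : EuclideanSpace ℝ ι → ℝ} (q : ι → ℝ → ℝ) {q' : ι → ℝ} {s : Finset ι}
    {v : EuclideanSpace ℝ ι} (hφ : DifferentiableAt ℝ φ v)
    (hq : ∀ i ∈ s, HasDerivAt (q i) (q' i) (v i))
    (hmin : IsMinOn (fun w => φ w + ∑ i ∈ s, q i (w i)) Set.univ v) {j : ι} (hj : j ∈ s) :
    gradient φ v j = -q' j := by
  have hsum : HasFDerivAt (fun w : EuclideanSpace ℝ ι => ∑ i ∈ s, q i (w i))
      (∑ i ∈ s, q' i • EuclideanSpace.proj i) v :=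
    HasFDerivAt.fun_sum fun i hi => (hq i hi).comp_hasFDerivAt v
      (EuclideanSpace.proj i : EuclideanSpace ℝ ι →L[ℝ] ℝ).hasFDerivAt
  have hcrit := congrArg (· (EuclideanSpace.single j (1 : ℝ)))
    ((hmin.isLocalMin Filter.univ_mem).hasFDerivAt_eq_zero (hφ.hasFDerivAt.add hsum))
  simp only [add_apply, _root_.sum_apply, smul_apply, PiLp.proj_apply, PiLp.single_apply,
    smul_eq_mul, mul_ite, mul_one, mul_zero, sum_ite_eq', hj, ↓reduceIte, zero_apply] at hcrit
  rw [gradient_apply_eq_fderiv_single]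
  linarith

namespace MajADMM

variable {K : ℕ} (P : MajADMM K)

theorem y_succ_eq_neg_gradient (t : ℕ) (k : Fin K) :
    ∀ j ∈ P.Nb k, P.y (t + 1) k j
      = - gradient (fun v => P.F k v (restr (P.Nb k) (P.z (P.τ t k))))
          (restr (P.Nb k) (P.x (t + 1) k)) j := by
  intro j hj
  have hq : ∀ i ∈ P.Nb k, HasDerivAt
      (fun r => P.y t k i * (r - P.z (t + 1) i) + P.ρ k / 2 * (r - P.z (t + 1) i) ^ 2)
      (P.y t k i + P.ρ k * (P.x (t + 1) k i - P.z (t + 1) i))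
      (restr (P.Nb k) (P.x (t + 1) k) i) := by
    intro i hi
    rw [show restr (P.Nb k) (P.x (t + 1) k) i = P.x (t + 1) k i by simp [restr, hi]]
    have h := (hasDerivAt_id' (P.x (t + 1) k i)).sub_const (P.z (t + 1) i)
    exact ((h.const_mul _).add ((h.pow 2).const_mul _)).congr_deriv (by ring)
  rw [gradient_apply_eq_neg_of_isMinOn_add_sum _ (P.F_diff k _ _) hq (P.x_update t k) hj,
    neg_neg, P.y_update t k j hj]

theorem norm_gradient_F_sub_le (k : Fin K) (z₁ z₀ x₁ x₀ : EuclideanSpace ℝ (Fin K)) :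
    ‖gradient (fun v => P.F k v z₁) x₁ - gradient (fun v => P.F k v z₀) x₀‖
      ≤ P.L k * ‖x₁ - x₀‖ + P.L k * ‖z₁ - z₀‖ :=
  (norm_sub_le_norm_sub_add_norm_sub _ (gradient (fun v => P.F k v z₁) x₀) _).trans
    (add_le_add (P.F_grad_lip_x k z₁ x₁ x₀) (P.F_grad_lip_z k x₀ z₁ z₀))

theorem sum_sq_norm_y_sub_le (t : ℕ) (k : Fin K) :
    ∑ j ∈ P.Nb k, ‖P.y (t + 2) k j - P.y (t + 1) k j‖ ^ 2
      ≤ 2 * P.L k ^ 2 * ‖restr (P.Nb k) (P.x (t + 2) k) - restr (P.Nb k) (P.x (t + 1) k)‖ ^ 2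
        + 2 * P.L k ^ 2
          * ‖restr (P.Nb k) (P.z (P.τ (t + 1) k)) - restr (P.Nb k) (P.z (P.τ t k))‖ ^ 2 := by
  set Δx := restr (P.Nb k) (P.x (t + 2) k) - restr (P.Nb k) (P.x (t + 1) k)
  set Δz := restr (P.Nb k) (P.z (P.τ (t + 1) k)) - restr (P.Nb k) (P.z (P.τ t k))
  set G₁ := gradient (fun v => P.F k v (restr (P.Nb k) (P.z (P.τ (t + 1) k))))
    (restr (P.Nb k) (P.x (t + 2) k))
  set G₀ := gradient (fun v => P.F k v (restr (P.Nb k) (P.z (P.τ t k))))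
    (restr (P.Nb k) (P.x (t + 1) k))
  calc ∑ j ∈ P.Nb k, ‖P.y (t + 2) k j - P.y (t + 1) k j‖ ^ 2
      = ∑ j ∈ P.Nb k, ‖(G₁ - G₀) j‖ ^ 2 := sum_congr rfl fun j hj => by
        rw [P.y_succ_eq_neg_gradient (t + 1) k j hj, P.y_succ_eq_neg_gradient t k j hj,
          neg_sub_neg, norm_sub_rev]
        rfl
    _ ≤ ‖G₁ - G₀‖ ^ 2 := sum_norm_sq_apply_le_norm_sq _ _
    _ ≤ (P.L k * ‖Δx‖ + P.L k * ‖Δz‖) ^ 2 := by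
        gcongr; exact P.norm_gradient_F_sub_le k _ _ _ _
    _ ≤ 2 * P.L k ^ 2 * ‖Δx‖ ^ 2 + 2 * P.L k ^ 2 * ‖Δz‖ ^ 2 := by
        nlinarith [sq_nonneg (P.L k * ‖Δx‖ - P.L k * ‖Δz‖)]

end MajADMM

theorem maj_admm_dual_difference_bound_general {K : ℕ} (P : MajADMM K)
    (t : ℕ) (ht : 1 ≤ t) (k : Fin K) :
    (∀ j ∈ P.Nb k,
      P.y (t + 1) k j
        = - gradient (fun v => P.F k v (restr (P.Nb k) (P.z (P.τ t k))))
            (restr (P.Nb k) (P.x (t + 1) k)) j) ∧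
    ∑ j ∈ P.Nb k, ‖P.y (t + 1) k j - P.y t k j‖ ^ 2
      ≤ 2 * P.L k ^ 2 * ‖restr (P.Nb k) (P.x (t + 1) k) - restr (P.Nb k) (P.x t k)‖ ^ 2
        + 2 * P.L k ^ 2 * ((P.Td k : ℝ) + 1) *
            ∑ d ∈ Finset.range (P.Td k + 1), ∑ j ∈ P.Nb k,
              ‖P.z (t + 1 - d) j - P.z (t - d) j‖ ^ 2 := by
  obtain ⟨s, rfl⟩ : ∃ s, t = s + 1 := ⟨t - 1, by omega⟩
  refine ⟨P.y_succ_eq_neg_gradient (s + 1) k, (P.sum_sq_norm_y_sub_le s k).trans ?_⟩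
  have hz := norm_restr_sub_sq_le_of_window (P.Nb k) P.z (T := P.Td k) (b := P.τ s k)
    (P.τ_le (s + 1) k) (by have := P.τ_le s k; omega)
    (by have := P.τ_ge (s + 1) k; omega) (by have := P.τ_ge s k; omega)
  rw [mul_assoc (2 * P.L k ^ 2) ((P.Td k : ℝ) + 1)]
  gcongr

/-- Majorized dual difference bound (asynchronous majorized ADMM, assumptions
(A2), (A4), (A5)): the dual iterates satisfy
`y_{kj}^{t+1} = −[∇_x f_k(x_k^{t+1}, z_k^{[t+1]_k})]_j`, and consequently the
squared dual differences are bounded by the `x`- and delayed `z`-differences. -/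
theorem maj_admm_dual_difference_bound {K : ℕ} (P : MajADMM K)
    (α β : Fin K → ℝ)
    (hα : ∀ k, α k = ((P.Nb k).card : ℝ) *
      (P.ρ k * P.freq k / 2
        - (8 * P.L k / P.ρ k ^ 2 + 1 / P.ρ k) * P.L k ^ 2 * ((P.Td k : ℝ) + 1) ^ 2
        - P.L k * (P.Td k : ℝ) ^ 2 / 2))
    (hβ : ∀ k, β k = (P.ρ k - 9 * P.L k) / 2 - 8 * P.L k ^ 3 / P.ρ k ^ 2)
    (hA5 : ∀ k, 0 < α k ∧ 0 < β k)
    (t : ℕ) (ht : 1 ≤ t) (k : Fin K) :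
    (∀ j ∈ P.Nb k,
      P.y (t + 1) k j
        = - gradient (fun v => P.F k v (restr (P.Nb k) (P.z (P.τ t k))))
            (restr (P.Nb k) (P.x (t + 1) k)) j) ∧
    ∑ j ∈ P.Nb k, ‖P.y (t + 1) k j - P.y t k j‖ ^ 2
      ≤ 2 * P.L k ^ 2 * ‖restr (P.Nb k) (P.x (t + 1) k) - restr (P.Nb k) (P.x t k)‖ ^ 2
        + 2 * P.L k ^ 2 * ((P.Td k : ℝ) + 1) *
            ∑ d ∈ Finset.range (P.Td k + 1), ∑ j ∈ P.Nb k,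
              ‖P.z (t + 1 - d) j - P.z (t - d) j‖ ^ 2 :=
  maj_admm_dual_difference_bound_general P t ht k
end
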